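/- Let (ξᵢ) be i.i.d. real random variables with mean 0 and variance σ², and s, t ∈ [0,1]. For the deleting-item normalized sums W̃ₙ(s) and W̃ₙ(t) with deleted sets J_{k(⌊ns⌋)}, J_{k(⌊nt⌋)} of sizes with k(m)/m → 0, the covariance Cov(W̃ₙ(s), W̃ₙ(t)) converges to min(s, t) as n → ∞. -/

import Mathlib

open MeasureTheory ProbabilityTheory Filter Topology

/-- Convergence in distribution of real random variables to the law `ν`. -/
def ConvInDistrib {Ω : Type*} [MeasurableSpace Ω] (μ : Measure Ω)
    (X : ℕ → Ω → ℝ) (ν : Measure ℝ) : Prop :=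
  ∀ f : BoundedContinuousFunction ℝ ℝ,
    Tendsto (fun n => ∫ ω, f (X n ω) ∂μ) atTop (𝓝 (∫ x, f x ∂ν))

/-- Covariance of two real random variables. -/
noncomputable def cov {Ω : Type*} [MeasurableSpace Ω] (μ : Measure Ω) (X Y : Ω → ℝ) : ℝ :=
  ∫ ω, (X ω - ∫ ω', X ω' ∂μ) * (Y ω - ∫ ω', Y ω' ∂μ) ∂μ

/-!
The summands are uncorrelated with common variance `σ²`, so the covariance of the two
normalised sums is `|A ∩ B| / n` for the two index sets `A`, `B`. These are initial segments
of lengths `⌊ns⌋` and `⌊nt⌋` with at most `k ⌊ns⌋ + k ⌊nt⌋ = o(n)` indices removed, which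
squeezes `|A ∩ B| / n` between `min (⌊ns⌋/n) (⌊nt⌋/n) - o(1)` and `min (⌊ns⌋/n) (⌊nt⌋/n)`.
-/

open Finset

lemma cov_eq_covariance {Ω : Type*} [MeasurableSpace Ω] (μ : Measure Ω) (X Y : Ω → ℝ) :
    cov μ X Y = cov[X, Y; μ] :=
  rfl

lemma covariance_sum_sum_eq_sum_inter_variance {Ω ι : Type*} [MeasurableSpace Ω]
    {μ : Measure Ω} [IsFiniteMeasure μ] [DecidableEq ι] {X : ι → Ω → ℝ}
    (hX : ∀ i, MemLp (X i) 2 μ) (hindep : Pairwise fun i j => IndepFun (X i) (X j) μ)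
    (A B : Finset ι) :
    cov[fun ω => ∑ i ∈ A, X i ω, fun ω => ∑ j ∈ B, X j ω; μ] = ∑ i ∈ A ∩ B, Var[X i; μ] := by
  have hcov : ∀ i j, cov[X i, X j; μ] = if i = j then Var[X i; μ] else 0 := by
    intro i j
    split_ifs with hij
    · subst hij; exact covariance_self (hX i).aemeasurable
    · exact (hindep hij).covariance_eq_zero (hX i) (hX j)
  simp_rw [covariance_fun_sum_fun_sum' (fun i _ => hX i) (fun j _ => hX j), hcov,
    sum_ite_eq, ← sum_filter, filter_mem_eq_inter]

lemma tendsto_natFloor_mul_div {u : ℝ} (hu : 0 ≤ u) :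
    Tendsto (fun n : ℕ => (⌊(n : ℝ) * u⌋₊ : ℝ) / n) atTop (𝓝 u) := by
  simpa [Function.comp_def, mul_comm] using
    (tendsto_nat_floor_mul_div_atTop hu).comp tendsto_natCast_atTop_atTop

lemma tendsto_apply_natFloor_mul_div_of_tendsto_div_zero {k : ℕ → ℕ}
    (hk : Tendsto (fun m => (k m : ℝ) / m) atTop (𝓝 0)) {u : ℝ} (hu : 0 ≤ u) :
    Tendsto (fun n : ℕ => (k ⌊(n : ℝ) * u⌋₊ : ℝ) / n) atTop (𝓝 0) := by
  rcases hu.eq_or_lt with rfl | hu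
  · simpa using tendsto_const_div_atTop_nhds_zero_nat (k 0 : ℝ)
  have hfloor : Tendsto (fun n : ℕ => ⌊(n : ℝ) * u⌋₊) atTop atTop :=
    tendsto_nat_floor_atTop.comp (tendsto_natCast_atTop_atTop.atTop_mul_const hu)
  have hprod := (hk.comp hfloor).mul (tendsto_natFloor_mul_div hu.le)
  rw [zero_mul] at hprod
  refine hprod.congr' ?_
  filter_upwards [hfloor.eventually_gt_atTop 0] with n hn
  simp only [Function.comp_apply]
  rw [div_mul_div_cancel₀ (by positivity)]

lemma card_range_sdiff_inter_range_sdiff_le_min (a b : ℕ) (I J : Finset ℕ) :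
    #((range a \ I) ∩ (range b \ J)) ≤ min a b := by
  simpa using (card_le_card (inter_subset_inter sdiff_subset sdiff_subset :
    (range a \ I) ∩ (range b \ J) ⊆ range a ∩ range b))

lemma min_le_card_range_sdiff_inter_range_sdiff_add (a b : ℕ) (I J : Finset ℕ) :
    min a b ≤ #((range a \ I) ∩ (range b \ J)) + #I + #J := by
  have hcover : range (min a b) ⊆ ((range a \ I) ∩ (range b \ J)) ∪ I ∪ J := by
    intro i hi
    simp only [mem_range, lt_min_iff] at hi
    by_cases hI : i ∈ I <;> by_cases hJ : i ∈ J <;> simp [*]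
  calc min a b = #(range (min a b)) := (card_range _).symm
    _ ≤ #(((range a \ I) ∩ (range b \ J)) ∪ I ∪ J) := card_le_card hcover
    _ ≤ _ := (card_union_le _ _).trans (Nat.add_le_add_right (card_union_le _ _) _)

lemma tendsto_card_inter_range_sdiff_div {k : ℕ → ℕ}
    (hk : Tendsto (fun m => (k m : ℝ) / m) atTop (𝓝 0))
    {J : ℕ → Finset ℕ} (hJ : ∀ m, #(J m) ≤ k m) {s t : ℝ} (hs : 0 ≤ s) (ht : 0 ≤ t) :
    Tendsto (fun n : ℕ => (#((range ⌊(n : ℝ) * s⌋₊ \ J ⌊(n : ℝ) * s⌋₊) ∩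
      (range ⌊(n : ℝ) * t⌋₊ \ J ⌊(n : ℝ) * t⌋₊)) : ℝ) / n) atTop (𝓝 (min s t)) := by
  set a : ℕ → ℕ := fun n => ⌊(n : ℝ) * s⌋₊
  set b : ℕ → ℕ := fun n => ⌊(n : ℝ) * t⌋₊
  have hmin := (tendsto_natFloor_mul_div hs).min (tendsto_natFloor_mul_div ht)
  have hlower := (hmin.sub (tendsto_apply_natFloor_mul_div_of_tendsto_div_zero hk hs)).sub
    (tendsto_apply_natFloor_mul_div_of_tendsto_div_zero hk ht)
  rw [sub_zero, sub_zero] at hlower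
  refine tendsto_of_tendsto_of_tendsto_of_le_of_le hlower hmin (fun n => ?_) (fun n => ?_)
  · have hcard : min (a n) (b n) ≤ #((range (a n) \ J (a n)) ∩ (range (b n) \ J (b n))) +
        k (a n) + k (b n) :=
      (min_le_card_range_sdiff_inter_range_sdiff_add _ _ _ _).trans (by gcongr <;> apply hJ)
    have hcard' := (Nat.cast_le (α := ℝ)).2 hcard
    push_cast at hcard'
    simp only [min_div_div_right n.cast_nonneg, ← sub_div]
    exact div_le_div_of_nonneg_right (by linarith) n.cast_nonneg
  · simp only [min_div_div_right n.cast_nonneg]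
    gcongr
    exact_mod_cast card_range_sdiff_inter_range_sdiff_le_min _ _ _ _

theorem deleting_item_covariance_tendsto_min_general
    {Ω : Type*} [MeasurableSpace Ω] (μ : Measure Ω) [IsProbabilityMeasure μ]
    (ξ : ℕ → Ω → ℝ) (σ : ℝ) (hσ : 0 < σ)
    (hindep : iIndepFun ξ μ)
    (hident : ∀ i, IdentDistrib (ξ i) (ξ 0) μ μ)
    (hL2 : MemLp (ξ 0) 2 μ)
    (hvar : variance (ξ 0) μ = σ ^ 2)
    (s t : ℝ) (hs : s ∈ Set.Icc (0 : ℝ) 1) (ht : t ∈ Set.Icc (0 : ℝ) 1)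
    (k : ℕ → ℕ) (hk : Tendsto (fun m => (k m : ℝ) / m) atTop (𝓝 0))
    (J : ℕ → Finset ℕ)
    (hJcard : ∀ m, (J m).card = k m)
    (W : ℕ → ℝ → Ω → ℝ)
    (hW : ∀ n u ω, W n u ω = (σ * Real.sqrt n)⁻¹ *
        ∑ i ∈ Finset.range ⌊(n : ℝ) * u⌋₊ \ J ⌊(n : ℝ) * u⌋₊, ξ i ω) :
    Tendsto (fun (n : ℕ) => cov μ (W n s) (W n t)) atTop (𝓝 (min s t)) := by
  have hL2i (i : ℕ) : MemLp (ξ i) 2 μ := (hident i).symm.memLp_snd hL2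
  have hscale (n : ℕ) : (σ * Real.sqrt n)⁻¹ * (σ * Real.sqrt n)⁻¹ * σ ^ 2 = (n : ℝ)⁻¹ := by
    rw [← mul_inv, mul_mul_mul_comm, Real.mul_self_sqrt n.cast_nonneg, ← sq, mul_inv,
      mul_right_comm, inv_mul_cancel₀ (by positivity), one_mul]
  have hcov (n : ℕ) : cov μ (W n s) (W n t) = (#((range ⌊(n : ℝ) * s⌋₊ \ J ⌊(n : ℝ) * s⌋₊) ∩
      (range ⌊(n : ℝ) * t⌋₊ \ J ⌊(n : ℝ) * t⌋₊)) : ℝ) / n := by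
    rw [cov_eq_covariance, funext (hW n s), funext (hW n t), covariance_const_mul_left, covariance_const_mul_right,
      covariance_sum_sum_eq_sum_inter_variance hL2i (fun i j hij => hindep.indepFun hij)]
    simp only [(hident _).variance_eq, hvar, sum_const, nsmul_eq_mul]
    rw [div_eq_mul_inv, ← hscale n]
    ring
  simpa only [hcov] using
    tendsto_card_inter_range_sdiff_div hk (fun m => (hJcard m).le) hs.1 ht.1

theorem deleting_item_covariance_tendsto_min
    {Ω : Type*} [MeasurableSpace Ω] (μ : Measure Ω) [IsProbabilityMeasure μ]
    (ξ : ℕ → Ω → ℝ) (σ : ℝ) (hσ : 0 < σ)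
    (hmeas : ∀ i, Measurable (ξ i))
    (hindep : iIndepFun ξ μ)
    (hident : ∀ i, IdentDistrib (ξ i) (ξ 0) μ μ)
    (hL2 : MemLp (ξ 0) 2 μ)
    (hmean : ∫ ω, ξ 0 ω ∂μ = 0)
    (hvar : variance (ξ 0) μ = σ ^ 2)
    (s t : ℝ) (hs : s ∈ Set.Icc (0 : ℝ) 1) (ht : t ∈ Set.Icc (0 : ℝ) 1)
    (k : ℕ → ℕ) (hk : Tendsto (fun m => (k m : ℝ) / m) atTop (𝓝 0))
    (J : ℕ → Finset ℕ) (hJ : ∀ m, J m ⊆ Finset.range m)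
    (hJcard : ∀ m, (J m).card = k m)
    (W : ℕ → ℝ → Ω → ℝ)
    (hW : ∀ n u ω, W n u ω = (σ * Real.sqrt n)⁻¹ *
        ∑ i ∈ Finset.range ⌊(n : ℝ) * u⌋₊ \ J ⌊(n : ℝ) * u⌋₊, ξ i ω) :
    Tendsto (fun (n : ℕ) => cov μ (W n s) (W n t)) atTop (𝓝 (min s t)) :=
  deleting_item_covariance_tendsto_min_general μ ξ σ hσ hindep hident hL2 hvar s t hs ht k hk J
    hJcard W hW
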